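/- arXiv:1502.05515 — 5 statements merged into one kernel-verified Lean document; each statement's English description precedes it below -/
import Mathlib

section
/- Let G ≤ S_m, C ≤ G a subgroup, S ⊆ G with C ⊆ S, and φ : S → ℂ a function vanishing on S \ C. If the stabilizer G_γ of γ ∈ Γ^m_k is trivial, then the subspaces ⟨e^φ_{γg} : g ∈ C⟩ and ⟨e^φ_{γg} : g ∈ G \ C⟩ of V^{⊗m} are orthogonal. -/
open scoped Classical

/-- The decomposable symmetrized tensor e^φ_α in coordinates. -/
noncomputable def esym (m k : ℕ) (S : Finset (Equiv.Perm (Fin m)))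
    (φ : Equiv.Perm (Fin m) → ℂ) (α : Fin m → Fin k) : (Fin m → Fin k) → ℂ :=
  fun β => (φ 1 / (S.card : ℂ)) * ∑ σ ∈ S, if α ∘ ⇑σ⁻¹ = β then φ σ else 0

/-- The induced inner product on V^{⊗m} in coordinates. -/
noncomputable def tip (m k : ℕ) (f g : (Fin m → Fin k) → ℂ) : ℂ :=
  ∑ β : Fin m → Fin k, f β * (starRingEnd ℂ) (g β)

lemma esym_support (m k : ℕ) (C : Subgroup (Equiv.Perm (Fin m)))
    (S : Finset (Equiv.Perm (Fin m)))
    (φ : Equiv.Perm (Fin m) → ℂ) (hφ : ∀ σ ∈ S, σ ∉ C → φ σ = 0)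
    (γ : Fin m → Fin k) (g : Equiv.Perm (Fin m)) (β : Fin m → Fin k)
    (hne : esym m k S φ (γ ∘ ⇑g) β ≠ 0) :
    ∃ c ∈ C, β = γ ∘ ⇑(g * c) := by
  unfold esym at hne
  have : ∑ σ ∈ S, (if (γ ∘ ⇑g) ∘ ⇑σ⁻¹ = β then φ σ else 0) ≠ 0 := by
    intro h0; rw [h0, mul_zero] at hne; exact hne rfl
  obtain ⟨σ, hσS, hσ⟩ := Finset.exists_ne_zero_of_sum_ne_zero this
  by_cases hc : σ ∈ C
  · refine ⟨σ⁻¹, inv_mem hc, ?_⟩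
    split_ifs at hσ with h
    · rw [← h]; ext x; simp [Equiv.Perm.coe_mul]
    · exact absurd rfl hσ
  · rw [hφ σ hσS hc] at hσ
    simp at hσ

theorem tip_gen_zero (m k : ℕ) (G C : Subgroup (Equiv.Perm (Fin m))) (hCG : C ≤ G)
    (S : Finset (Equiv.Perm (Fin m)))
    (φ : Equiv.Perm (Fin m) → ℂ) (hφ : ∀ σ ∈ S, σ ∉ C → φ σ = 0)
    (γ : Fin m → Fin k) (hγ : ∀ σ ∈ G, γ ∘ ⇑σ = γ → σ = 1)
    (g g' : Equiv.Perm (Fin m)) (hg : g ∈ C) (hg' : g' ∈ G) (hg'C : g' ∉ C) :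
    tip m k (esym m k S φ (γ ∘ ⇑g)) (esym m k S φ (γ ∘ ⇑g')) = 0 := by
  unfold tip
  apply Finset.sum_eq_zero
  intro β _
  by_cases h1 : esym m k S φ (γ ∘ ⇑g) β = 0
  · rw [h1, zero_mul]
  by_cases h2 : esym m k S φ (γ ∘ ⇑g') β = 0
  · rw [h2, map_zero, mul_zero]
  exfalso
  obtain ⟨c, hc, hβ1⟩ := esym_support m k C S φ hφ γ g β h1
  obtain ⟨c', hc', hβ2⟩ := esym_support m k C S φ hφ γ g' β h2
  have heq : γ ∘ ⇑(g * c) = γ ∘ ⇑(g' * c') := hβ1 ▸ hβ2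
  have hmem : (g * c) * (g' * c')⁻¹ ∈ G := mul_mem (hCG (mul_mem hg hc))
    (inv_mem (mul_mem hg' (hCG hc')))
  have hfix : γ ∘ ⇑((g * c) * (g' * c')⁻¹) = γ := by
    have h2 : γ ∘ (⇑(g * c) ∘ ⇑(g' * c')⁻¹) = γ ∘ (⇑(g' * c') ∘ ⇑(g' * c')⁻¹) := by
      rw [← Function.comp_assoc, heq, Function.comp_assoc]
    rw [← Equiv.Perm.coe_mul, ← Equiv.Perm.coe_mul, mul_inv_cancel] at h2
    simpa using h2
  have h1 : (g * c) * (g' * c')⁻¹ = 1 := hγ _ hmem hfix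
  have : g * c = g' * c' := by
    have := mul_eq_one_iff_eq_inv.mp h1
    simpa using this
  have : g' = g * c * c'⁻¹ := by
    rw [this]; group
  exact hg'C (this ▸ mul_mem (mul_mem hg hc) (inv_mem hc'))

/-- If φ vanishes on S \ C and the stabilizer of γ is trivial, then
⟨e^φ_{γg} : g ∈ C⟩ and ⟨e^φ_{γg} : g ∈ G \ C⟩ are orthogonal subspaces. -/
theorem stmt5 (m k : ℕ) (G C : Subgroup (Equiv.Perm (Fin m))) (hCG : C ≤ G)
    (S : Finset (Equiv.Perm (Fin m))) (he : (1 : Equiv.Perm (Fin m)) ∈ S)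
    (hSG : ∀ σ ∈ S, σ ∈ G) (hCS : ∀ c : Equiv.Perm (Fin m), c ∈ C → c ∈ S)
    (φ : Equiv.Perm (Fin m) → ℂ) (hφ : ∀ σ ∈ S, σ ∉ C → φ σ = 0)
    (γ : Fin m → Fin k) (hγ : ∀ σ ∈ G, γ ∘ ⇑σ = γ → σ = 1) :
    ∀ f ∈ Submodule.span ℂ {f : (Fin m → Fin k) → ℂ | ∃ g ∈ C, f = esym m k S φ (γ ∘ ⇑g)},
    ∀ h ∈ Submodule.span ℂ
        {f : (Fin m → Fin k) → ℂ | ∃ g : Equiv.Perm (Fin m), g ∈ G ∧ g ∉ C ∧ f = esym m k S φ (γ ∘ ⇑g)},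
    tip m k f h = 0 := by
  intro f hf h hh
  induction hf using Submodule.span_induction with
  | mem f hfm =>
    obtain ⟨g, hg, rfl⟩ := hfm
    induction hh using Submodule.span_induction with
    | mem h hhm =>
      obtain ⟨g', hg', hg'C, rfl⟩ := hhm
      exact tip_gen_zero m k G C hCG S φ hφ γ hγ g g' hg hg' hg'C
    | zero => simp [tip]
    | add a b _ _ ha hb =>
      have : tip m k (esym m k S φ (γ ∘ ⇑g)) (a + b)
          = tip m k (esym m k S φ (γ ∘ ⇑g)) a + tip m k (esym m k S φ (γ ∘ ⇑g)) b := by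
        unfold tip
        rw [← Finset.sum_add_distrib]
        exact Finset.sum_congr rfl fun β _ => by simp [mul_add]
      rw [this, ha, hb, add_zero]
    | smul r a _ ha =>
      have : tip m k (esym m k S φ (γ ∘ ⇑g)) (r • a)
          = (starRingEnd ℂ) r * tip m k (esym m k S φ (γ ∘ ⇑g)) a := by
        unfold tip
        rw [Finset.mul_sum]
        exact Finset.sum_congr rfl fun β _ => by simp [map_mul]; ring
      rw [this, ha, mul_zero]
  | zero => simp [tip]
  | add a b _ _ ha hb =>
    have : tip m k (a + b) h = tip m k a h + tip m k b h := by
      unfold tip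
      rw [← Finset.sum_add_distrib]
      exact Finset.sum_congr rfl fun β _ => by simp [add_mul]
    rw [this, ha, hb, add_zero]
  | smul r a _ ha =>
    have : tip m k (r • a) h = r * tip m k a h := by
      unfold tip
      rw [Finset.mul_sum]
      exact Finset.sum_congr rfl fun β _ => by simp [Pi.smul_apply, smul_eq_mul]; ring
    rw [this, ha, mul_zero]
end

section
/- Let G ≤ S_m, S ≤ G a subgroup, and φ : S → ℂ a nonzero constant function. Then for any α ∈ Γ^m_k and σ, τ ∈ G, either e^φ_{ασ} = e^φ_{ατ} or ⟨e^φ_{ασ}, e^φ_{ατ}⟩ = 0. In particular the orbital subspace V^φ_α(G) = ⟨e^φ_{ασ} : σ ∈ G⟩ has an orthogonal basis of standard symmetrized tensors. -/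
/-!
Since φ is constant on S, `esym γ β` is `c² / |S|` times the number of `s ∈ S` with
`γ ∘ s⁻¹ = β`: its support is the orbit of `γ` under right composition by `S`, and `esym γ`
depends only on that orbit. Two of these tensors thus either come from the same orbit and
coincide, or have disjoint supports and are orthogonal. Keeping one `σ ∈ G` for each distinct
tensor `esym (α ∘ σ)` gives a pairwise orthogonal family of nonzero vectors, which is linearly
independent and spans the orbital subspace.
-/

open scoped Classical

theorem tip_eq_inner {m k : ℕ} (f g : (Fin m → Fin k) → ℂ) :
    tip m k f g = inner ℂ (WithLp.toLp 2 g) (WithLp.toLp 2 f) := by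
  simp only [tip, PiLp.inner_apply, RCLike.inner_apply]

theorem linearIndependent_of_ne_zero_of_tip_eq_zero {m k : ℕ} {ι : Type*}
    {F : ι → (Fin m → Fin k) → ℂ} (hz : ∀ i, F i ≠ 0)
    (ho : Pairwise fun i j => tip m k (F i) (F j) = 0) : LinearIndependent ℂ F := by
  have hL : LinearIndependent ℂ fun i => WithLp.toLp 2 (F i) :=
    linearIndependent_of_ne_zero_of_inner_eq_zero (fun i => by simpa using hz i)
      fun i j hij => (tip_eq_inner (F j) (F i)).symm.trans (ho hij.symm)
  exact hL.map' (WithLp.linearEquiv 2 ℂ _).toLinearMap (LinearEquiv.ker _)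

section esym

variable {m k : ℕ} {S : Finset (Equiv.Perm (Fin m))} {φ : Equiv.Perm (Fin m) → ℂ} {c : ℂ}

theorem esym_apply_of_const (h1 : 1 ∈ S) (hφ : ∀ σ ∈ S, φ σ = c) (γ β : Fin m → Fin k) :
    esym m k S φ γ β =
      c * c / S.card * (S.filter fun s : Equiv.Perm (Fin m) => γ ∘ ⇑s⁻¹ = β).card := by
  have hsum : ∑ σ ∈ S, (if γ ∘ ⇑σ⁻¹ = β then φ σ else 0)
      = ∑ σ ∈ S, if γ ∘ ⇑σ⁻¹ = β then c else 0 :=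
    Finset.sum_congr rfl fun s hs => by rw [hφ s hs]
  rw [esym, hφ 1 h1, hsum, ← Finset.sum_filter, Finset.sum_const, nsmul_eq_mul]
  ring

theorem esym_apply_ne_zero_iff (h1 : 1 ∈ S) (hφ : ∀ σ ∈ S, φ σ = c) (hc : c ≠ 0)
    (γ β : Fin m → Fin k) : esym m k S φ γ β ≠ 0 ↔ ∃ s ∈ S, γ ∘ ⇑s⁻¹ = β := by
  have hS : (S.card : ℂ) ≠ 0 := Nat.cast_ne_zero.mpr (Finset.card_ne_zero_of_mem h1)
  rw [esym_apply_of_const h1 hφ, mul_ne_zero_iff, Nat.cast_ne_zero, ← Nat.pos_iff_ne_zero,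
    Finset.card_pos, Finset.filter_nonempty_iff]
  simp [hc, hS]

theorem esym_comp_of_mem (h1 : 1 ∈ S) (hmul : ∀ a ∈ S, ∀ b ∈ S, a * b ∈ S)
    (hinv : ∀ a ∈ S, a⁻¹ ∈ S) (hφ : ∀ σ ∈ S, φ σ = c) {ρ : Equiv.Perm (Fin m)} (hρ : ρ ∈ S)
    (γ : Fin m → Fin k) : esym m k S φ (γ ∘ ⇑ρ) = esym m k S φ γ := by
  funext β
  rw [esym_apply_of_const h1 hφ, esym_apply_of_const h1 hφ]
  congr 2
  refine Finset.card_bij' (fun s _ => s * ρ⁻¹) (fun u _ => u * ρ) ?_ ?_ ?_ ?_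
  · intro s hs
    rw [Finset.mem_filter] at hs ⊢
    refine ⟨hmul s hs.1 ρ⁻¹ (hinv ρ hρ), ?_⟩
    rw [← hs.2]
    ext x; simp
  · intro u hu
    rw [Finset.mem_filter] at hu ⊢
    refine ⟨hmul u hu.1 ρ hρ, ?_⟩
    rw [← hu.2]
    ext x; simp
  · intro s _; simp
  · intro u _; simp

theorem esym_ne_zero (h1 : 1 ∈ S) (hφ : ∀ σ ∈ S, φ σ = c) (hc : c ≠ 0)
    (γ : Fin m → Fin k) : esym m k S φ γ ≠ 0 :=
  fun h => (esym_apply_ne_zero_iff h1 hφ hc γ γ).mpr ⟨1, h1, by simp⟩ (congrFun h γ)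

theorem esym_eq_of_apply_ne_zero (h1 : 1 ∈ S) (hmul : ∀ a ∈ S, ∀ b ∈ S, a * b ∈ S)
    (hinv : ∀ a ∈ S, a⁻¹ ∈ S) (hφ : ∀ σ ∈ S, φ σ = c) (hc : c ≠ 0) {γ β : Fin m → Fin k}
    (h : esym m k S φ γ β ≠ 0) : esym m k S φ γ = esym m k S φ β := by
  obtain ⟨s, hs, rfl⟩ := (esym_apply_ne_zero_iff h1 hφ hc γ β).mp h
  exact (esym_comp_of_mem h1 hmul hinv hφ (hinv s hs) γ).symm

theorem esym_eq_or_tip_eq_zero (h1 : 1 ∈ S) (hmul : ∀ a ∈ S, ∀ b ∈ S, a * b ∈ S)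
    (hinv : ∀ a ∈ S, a⁻¹ ∈ S) (hφ : ∀ σ ∈ S, φ σ = c) (hc : c ≠ 0) (γ γ' : Fin m → Fin k) :
    esym m k S φ γ = esym m k S φ γ' ∨ tip m k (esym m k S φ γ) (esym m k S φ γ') = 0 := by
  by_cases h : ∃ β, esym m k S φ γ β ≠ 0 ∧ esym m k S φ γ' β ≠ 0
  · obtain ⟨β, hγ, hγ'⟩ := h
    exact .inl ((esym_eq_of_apply_ne_zero h1 hmul hinv hφ hc hγ).trans
      (esym_eq_of_apply_ne_zero h1 hmul hinv hφ hc hγ').symm)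
  · push Not at h
    refine .inr (Finset.sum_eq_zero fun β _ => ?_)
    by_cases hβ : esym m k S φ γ β = 0
    · rw [hβ, zero_mul]
    · rw [h β hβ, map_zero, mul_zero]

end esym

theorem stmt6_general (m k : ℕ) (G : Subgroup (Equiv.Perm (Fin m)))
    (S : Finset (Equiv.Perm (Fin m)))
    (h1 : (1 : Equiv.Perm (Fin m)) ∈ S)
    (hmul : ∀ a ∈ S, ∀ b ∈ S, a * b ∈ S) (hinv : ∀ a ∈ S, a⁻¹ ∈ S)
    (φ : Equiv.Perm (Fin m) → ℂ) (c : ℂ) (hc : c ≠ 0) (hφ : ∀ σ ∈ S, φ σ = c)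
    (α : Fin m → Fin k) :
    (∀ σ ∈ G, ∀ τ ∈ G,
        esym m k S φ (α ∘ ⇑σ) = esym m k S φ (α ∘ ⇑τ) ∨
          tip m k (esym m k S φ (α ∘ ⇑σ)) (esym m k S φ (α ∘ ⇑τ)) = 0) ∧
    ∃ T : Finset (Equiv.Perm (Fin m)), (∀ σ ∈ T, σ ∈ G) ∧
      (∀ σ ∈ T, ∀ τ ∈ T, σ ≠ τ →
        tip m k (esym m k S φ (α ∘ ⇑σ)) (esym m k S φ (α ∘ ⇑τ)) = 0) ∧
      LinearIndependent ℂ (fun σ : T => esym m k S φ (α ∘ ⇑(σ : Equiv.Perm (Fin m)))) ∧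
      Submodule.span ℂ (Set.range fun σ : T => esym m k S φ (α ∘ ⇑(σ : Equiv.Perm (Fin m)))) =
        Submodule.span ℂ
          {f : (Fin m → Fin k) → ℂ | ∃ σ ∈ G, f = esym m k S φ (α ∘ ⇑σ)} := by
  set F : Equiv.Perm (Fin m) → (Fin m → Fin k) → ℂ := fun σ => esym m k S φ (α ∘ ⇑σ)
  have hdich (σ τ) : F σ = F τ ∨ tip m k (F σ) (F τ) = 0 :=
    esym_eq_or_tip_eq_zero h1 hmul hinv hφ hc _ _
  obtain ⟨T, hTG, hinj, himage⟩ := Finset.exists_subset_injOn_image_eq_of_surjOn (f := F)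
    (G : Set (Equiv.Perm (Fin m))) (Set.toFinite (F '' G)).toFinset (by simp [Set.SurjOn])
  have horth : ∀ σ ∈ T, ∀ τ ∈ T, σ ≠ τ → tip m k (F σ) (F τ) = 0 := fun σ hσ τ hτ hne =>
    (hdich σ τ).resolve_left fun h => hne (hinj hσ hτ h)
  refine ⟨fun σ _ τ _ => hdich σ τ, T, fun σ hσ => hTG hσ, horth, ?_, ?_⟩
  · exact linearIndependent_of_ne_zero_of_tip_eq_zero (fun σ => esym_ne_zero h1 hφ hc _)
      fun σ τ hne => horth σ σ.prop τ τ.prop (Subtype.coe_injective.ne hne)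
  · have himage' : F '' T = F '' G := by
      simpa [← Finset.coe_inj] using himage
    have hG : {f | ∃ σ ∈ G, f = F σ} = F '' G := by
      ext f
      simp [eq_comm]
    change Submodule.span ℂ (Set.range fun σ : (T : Set (Equiv.Perm (Fin m))) => F σ) = _
    rw [← Set.image_eq_range, himage', hG]

/-- If S is a subgroup of G and φ is a nonzero constant on S, then any two standard
symmetrized tensors e^φ_{ασ}, e^φ_{ατ} (σ, τ ∈ G) are equal or orthogonal, and the
orbital subspace V^φ_α(G) has an orthogonal basis of standard symmetrized tensors. -/
theorem stmt6 (m k : ℕ) (G : Subgroup (Equiv.Perm (Fin m)))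
    (S : Finset (Equiv.Perm (Fin m))) (hSG : ∀ σ ∈ S, σ ∈ G)
    (h1 : (1 : Equiv.Perm (Fin m)) ∈ S)
    (hmul : ∀ a ∈ S, ∀ b ∈ S, a * b ∈ S) (hinv : ∀ a ∈ S, a⁻¹ ∈ S)
    (φ : Equiv.Perm (Fin m) → ℂ) (c : ℂ) (hc : c ≠ 0) (hφ : ∀ σ ∈ S, φ σ = c)
    (α : Fin m → Fin k) :
    (∀ σ ∈ G, ∀ τ ∈ G,
        esym m k S φ (α ∘ ⇑σ) = esym m k S φ (α ∘ ⇑τ) ∨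
          tip m k (esym m k S φ (α ∘ ⇑σ)) (esym m k S φ (α ∘ ⇑τ)) = 0) ∧
    ∃ T : Finset (Equiv.Perm (Fin m)), (∀ σ ∈ T, σ ∈ G) ∧
      (∀ σ ∈ T, ∀ τ ∈ T, σ ≠ τ →
        tip m k (esym m k S φ (α ∘ ⇑σ)) (esym m k S φ (α ∘ ⇑τ)) = 0) ∧
      LinearIndependent ℂ (fun σ : T => esym m k S φ (α ∘ ⇑(σ : Equiv.Perm (Fin m)))) ∧
      Submodule.span ℂ (Set.range fun σ : T => esym m k S φ (α ∘ ⇑(σ : Equiv.Perm (Fin m)))) =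
        Submodule.span ℂ
          {f : (Fin m → Fin k) → ℂ | ∃ σ ∈ G, f = esym m k S φ (α ∘ ⇑σ)} :=
  stmt6_general m k G S h1 hmul hinv φ c hc hφ α
end

section
/- Let p be a prime, 2n = l·p^t with p ∤ l. The set of p-regular elements of the dicyclic group T_{4n} is {r^{jp^t}, sr^k : 0 ≤ j < l, 1 ≤ k ≤ 2n} if p ≠ 2, and {r^{jp^t} : 0 ≤ j < l} if p = 2. (An element is p-regular iff its order is not divisible by p; note each sr^k has order 4.) -/
/-!
In a cyclic group of order `l * p ^ t` with `p ∤ l`, an element is `p`-regular exactly when it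
is a `p ^ t`-th multiple; applied to `⟨r⟩ ≅ ZMod (2 * n)` this describes the regular powers of
`r`. Every element `s r ^ k` has order `4`, so it is `p`-regular exactly when `p ≠ 2`.
-/

theorem Nat.Prime.not_dvd_div_gcd_iff {d p l t : ℕ} (hp : p.Prime) (hpl : ¬ p ∣ l)
    (hd : d = l * p ^ t) (v : ℕ) : ¬ p ∣ d / Nat.gcd d v ↔ p ^ t ∣ v := by
  set g := Nat.gcd d v
  have hg : g ∣ d := Nat.gcd_dvd_left d v
  constructor
  · intro h
    have hcop : Nat.Coprime (p ^ t) (d / g) := (hp.coprime_iff_not_dvd.2 h).pow_left t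
    have hdvd : p ^ t ∣ d / g * g := by
      rw [Nat.div_mul_cancel hg, hd]
      exact dvd_mul_left _ _
    exact (hcop.dvd_of_dvd_mul_left hdvd).trans (Nat.gcd_dvd_right d v)
  · intro h hdiv
    have hl : l ≠ 0 := by rintro rfl; exact hpl (dvd_zero p)
    have hd0 : 0 < d := hd ▸ Nat.mul_pos (Nat.pos_of_ne_zero hl) (pow_pos hp.pos t)
    have hpt : p ^ t ∣ g := Nat.dvd_gcd (hd ▸ dvd_mul_left _ _) h
    have hdl : d / g ∣ l := (Nat.div_dvd_iff_dvd_mul hg (Nat.gcd_pos_of_pos_left v hd0)).2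
      (hd ▸ (mul_dvd_mul_left l hpt).trans (dvd_of_eq (mul_comm l g)))
    exact hpl (hdiv.trans hdl)

theorem ZMod.dvd_val_iff_exists_lt {m l k : ℕ} [NeZero m] (hm : m = l * k) (v : ZMod m) :
    k ∣ v.val ↔ ∃ j < l, v = ((j * k : ℕ) : ZMod m) := by
  constructor
  · rintro ⟨w, hw⟩
    refine ⟨w, Nat.lt_of_mul_lt_mul_right (a := k) ?_, ?_⟩
    · rw [mul_comm, ← hw, ← hm]
      exact v.val_lt
    · rw [mul_comm, ← hw, ZMod.natCast_zmod_val]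
  · rintro ⟨j, hj, rfl⟩
    have hk : 0 < k := Nat.pos_of_ne_zero fun hk => NeZero.ne m (by rw [hm, hk, mul_zero])
    have hlt : j * k < m := hm ▸ (Nat.mul_lt_mul_right hk).2 hj
    rw [ZMod.val_natCast_of_lt hlt]
    exact dvd_mul_left k j

namespace QuaternionGroup

variable {n : ℕ} [NeZero n]

theorem not_dvd_orderOf_a_iff {p l t : ℕ} (hp : p.Prime) (hpl : ¬ p ∣ l)
    (h2n : 2 * n = l * p ^ t) (i : ZMod (2 * n)) :
    ¬ p ∣ orderOf (a i) ↔ ∃ j < l, i = ((j * p ^ t : ℕ) : ZMod (2 * n)) := by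
  rw [orderOf_a, ← ZMod.dvd_val_iff_exists_lt h2n, hp.not_dvd_div_gcd_iff hpl h2n]

theorem prime_dvd_orderOf_xa_iff {p : ℕ} (hp : p.Prime) (i : ZMod (2 * n)) :
    p ∣ orderOf (xa i) ↔ p = 2 := by
  rw [orderOf_xa, show 4 = 2 ^ 2 from rfl]
  exact ⟨fun h => (Nat.prime_dvd_prime_iff_eq hp Nat.prime_two).1 (hp.dvd_of_dvd_pow h),
    by rintro rfl; exact dvd_pow_self 2 two_ne_zero⟩

end QuaternionGroup

/-- The set of p-regular elements of the dicyclic group T_{4n} (2n = lp^t, p ∤ l) is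
{r^{jp^t} : 0 ≤ j < l} ∪ {sr^k} if p ≠ 2, and {r^{jp^t} : 0 ≤ j < l} if p = 2. -/
theorem stmt9 (n p l t : ℕ) (hn : 0 < n) (hp : p.Prime) (hpl : ¬ p ∣ l)
    (h2n : 2 * n = l * p ^ t) :
    (p ≠ 2 → {g : QuaternionGroup n | ¬ p ∣ orderOf g} =
        {g : QuaternionGroup n |
            ∃ j : ℕ, j < l ∧ g = QuaternionGroup.a ((j * p ^ t : ℕ) : ZMod (2 * n))} ∪
          {g : QuaternionGroup n | ∃ i : ZMod (2 * n), g = QuaternionGroup.xa i}) ∧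
    (p = 2 → {g : QuaternionGroup n | ¬ p ∣ orderOf g} =
        {g : QuaternionGroup n |
            ∃ j : ℕ, j < l ∧ g = QuaternionGroup.a ((j * p ^ t : ℕ) : ZMod (2 * n))}) := by
  have : NeZero n := ⟨hn.ne'⟩
  constructor <;> intro hp2 <;> ext (i | i) <;>
    simp only [Set.mem_ofPred_eq, Set.mem_union, QuaternionGroup.not_dvd_orderOf_a_iff hp hpl h2n,
      QuaternionGroup.prime_dvd_orderOf_xa_iff hp] <;> simp [hp2]
end

section
/- In the semidihedral group SD_{8n} = ⟨a, b | a^{4n} = b² = e, bab = a^{2n−1}⟩ with n ≥ 2, the stabilizer of the tuple α = (1,2,2,...,2,3) ∈ {1,2,3}^{4n} under the right action of SD_{8n} embedded in S_{4n} (via T(a)(t) = t+1 mod 4n, T(b)(t) = (2n−1)t mod 4n) is trivial: the only group element fixing both position 1 and position 4n (i.e., position 0 mod 4n) is the identity. -/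
/-! Both generators act on `ℤ/4n` by affine maps `t ↦ c * t + d`, and the affine permutations of a
commutative ring form a subgroup. An affine map fixing `0` and `1` has `d = 0` and `c = 1`. -/

def affinePerms (R : Type*) [CommRing R] : Subgroup (Equiv.Perm R) where
  carrier := {σ | ∃ c d : R, ∀ t, σ t = c * t + d}
  one_mem' := ⟨1, 0, fun t => by simp⟩
  mul_mem' := by
    rintro σ τ ⟨c, d, hσ⟩ ⟨c', d', hτ⟩
    exact ⟨c * c', c * d' + d, fun t => by simp only [Equiv.Perm.mul_apply, hσ, hτ]; ring⟩
  inv_mem' := by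
    rintro σ ⟨c, d, hσ⟩
    -- surjectivity makes the slope `c` a unit, with inverse `s`
    obtain ⟨s, hs⟩ := σ.surjective (d + 1)
    have hcs : c * s = 1 := by rw [hσ] at hs; linear_combination hs
    refine ⟨s, -(s * d), fun t => Equiv.Perm.inv_eq_iff_eq.mpr ?_⟩
    rw [hσ]
    linear_combination (d - t) * hcs

theorem eq_one_of_mem_affinePerms {R : Type*} [CommRing R] {σ : Equiv.Perm R}
    (hσ : σ ∈ affinePerms R) (h1 : σ 1 = 1) (h0 : σ 0 = 0) : σ = 1 := by
  obtain ⟨c, d, hcd⟩ := hσ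
  have hd : d = 0 := by simpa [hcd] using h0
  have hc : c = 1 := by simpa [hcd, hd] using h1
  ext t
  simp [hcd, hc, hd]

theorem stmt15_general (n : ℕ) (a b : Equiv.Perm (ZMod (4 * n)))
    (ha : ∀ t : ZMod (4 * n), a t = t + 1)
    (hb : ∀ t : ZMod (4 * n), b t = (2 * (n : ZMod (4 * n)) - 1) * t) :
    ∀ σ ∈ Subgroup.closure {a, b}, σ 1 = 1 → σ 0 = 0 → σ = 1 := by
  have hgen : {a, b} ⊆ (affinePerms (ZMod (4 * n)) : Set _) := by
    rintro _ (rfl | rfl)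
    · exact ⟨1, 1, fun t => by rw [ha, one_mul]⟩
    · exact ⟨_, 0, fun t => by rw [hb, add_zero]⟩
  intro σ hσ
  exact eq_one_of_mem_affinePerms ((Subgroup.closure_le _).mpr hgen hσ)

/-- In the semidihedral group SD_{8n} (n ≥ 2), embedded in the symmetric group on ℤ/4n
via a : t ↦ t + 1 and b : t ↦ (2n−1)t, the only element fixing both the point 1
(position 1) and the point 0 (position 4n) is the identity; hence the stabilizer of the
tuple α = (1,2,...,2,3) is trivial. -/
theorem stmt15 (n : ℕ) (hn : 2 ≤ n) (a b : Equiv.Perm (ZMod (4 * n)))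
    (ha : ∀ t : ZMod (4 * n), a t = t + 1)
    (hb : ∀ t : ZMod (4 * n), b t = (2 * (n : ZMod (4 * n)) - 1) * t) :
    ∀ σ ∈ Subgroup.closure {a, b}, σ 1 = 1 → σ 0 = 0 → σ = 1 :=
  stmt15_general n a b ha hb
end

section
/- Let l be a positive integer divisible by 4 and h an odd integer with 4h/l ∉ ℤ, and let φ(m) = 2cos(2hmπ/l) for even m and φ(m) = 2i·sin(2hmπ/l) for odd m. Then for all even integers i, j: ∑_{k=0}^{l−1} φ(k+i)·conj(φ(k+j)) = 2l·cos((i−j)(2h/l)π). -/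
/-- For l ≡ 0 (mod 4), h odd with 4h/l ∉ ℤ, and φ(m) = 2cos(2hmπ/l) for even m,
φ(m) = 2i·sin(2hmπ/l) for odd m: for all even i, j,
∑_{k=0}^{l−1} φ(k+i)·conj(φ(k+j)) = 2l·cos((i−j)(2h/l)π). -/
theorem stmt17 (l : ℕ) (h : ℤ) (hl4 : 4 ∣ l) (hl : 0 < l) (hodd : Odd h)
    (hndvd : ¬ (l : ℤ) ∣ 4 * h)
    (φ : ℤ → ℂ)
    (hφe : ∀ m : ℤ, Even m →
      φ m = 2 * (Real.cos (2 * (h : ℝ) * (m : ℝ) * Real.pi / (l : ℝ)) : ℝ))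
    (hφo : ∀ m : ℤ, Odd m →
      φ m = 2 * Complex.I * (Real.sin (2 * (h : ℝ) * (m : ℝ) * Real.pi / (l : ℝ)) : ℝ))
    (i j : ℤ) (hi : Even i) (hj : Even j) :
    ∑ k ∈ Finset.range l, φ ((k : ℤ) + i) * (starRingEnd ℂ) (φ ((k : ℤ) + j)) =
      2 * (l : ℝ) *
        (Real.cos (((i : ℝ) - (j : ℝ)) * (2 * (h : ℝ) / (l : ℝ)) * Real.pi) : ℝ) := by
  have hl0 : (l : ℝ) ≠ 0 := Nat.cast_ne_zero.mpr hl.ne'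
  set c : ℝ := 2 * (h : ℝ) * Real.pi / (l : ℝ) with hcdef
  set w : ℂ := Complex.exp ((c : ℂ) * Complex.I) with hwdef
  have hw0 : w ≠ 0 := Complex.exp_ne_zero _
  have hwz : ∀ m : ℤ, w ^ m = Complex.exp (((c * (m : ℝ) : ℝ) : ℂ) * Complex.I) := by
    intro m
    rw [hwdef, ← Complex.exp_int_mul]
    congr 1
    push_cast
    ring
  -- expressing φ via w
  have harg : ∀ m : ℤ, 2 * (h : ℝ) * (m : ℝ) * Real.pi / (l : ℝ) = c * m := by
    intro m; rw [hcdef]; ring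
  have hcos : ∀ x : ℝ, (2 : ℂ) * (Real.cos x : ℝ) =
      Complex.exp ((x : ℂ) * Complex.I) + Complex.exp ((-x : ℝ) * Complex.I) := by
    intro x
    rw [Complex.exp_mul_I, Complex.exp_mul_I]
    push_cast
    simp [Complex.cos_neg, Complex.sin_neg]
    ring
  have hsin : ∀ x : ℝ, (2 : ℂ) * Complex.I * (Real.sin x : ℝ) =
      Complex.exp ((x : ℂ) * Complex.I) - Complex.exp ((-x : ℝ) * Complex.I) := by
    intro x
    rw [Complex.exp_mul_I, Complex.exp_mul_I]
    push_cast
    simp [Complex.cos_neg, Complex.sin_neg]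
    ring
  have hφe' : ∀ m : ℤ, Even m → φ m = w ^ m + w ^ (-m) := by
    intro m hm
    rw [hφe m hm, harg m, hcos, hwz, hwz]
    push_cast
    try ring_nf
  have hφo' : ∀ m : ℤ, Odd m → φ m = w ^ m - w ^ (-m) := by
    intro m hm
    rw [hφo m hm, harg m, hsin, hwz, hwz]
    push_cast
    try ring_nf
  have hconjw : ∀ m : ℤ, (starRingEnd ℂ) (w ^ m) = w ^ (-m) := by
    intro m
    rw [hwz, hwz, ← Complex.exp_conj]
    congr 1
    simp [Complex.conj_ofReal]
    try push_cast
    try ring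
  set ζ : ℂ := -(w ^ (2:ℤ)) with hζdef
  have hconjζ : (starRingEnd ℂ) ζ = -(w ^ (-2:ℤ)) := by
    rw [hζdef, map_neg, hconjw]
  have hleven : Even l := by obtain ⟨t, ht⟩ := hl4; exact ⟨2*t, by omega⟩
  have hζl : ζ ^ l = 1 := by
    have h1 : ζ ^ l = w ^ ((2 * (l:ℕ) : ℤ)) := by
      rw [hζdef, neg_pow, hleven.neg_one_pow, one_mul, ← zpow_natCast, ← zpow_mul]
    rw [h1, hwz]
    have h2 : ((c * (((2 * (l:ℕ) : ℤ)) : ℝ) : ℝ) : ℂ) * Complex.I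
        = ((2*h : ℤ) : ℂ) * (2 * Real.pi * Complex.I) := by
      have h3 : (c * (((2 * (l:ℕ) : ℤ)) : ℝ) : ℝ) = ((2*h : ℤ) : ℝ) * (2 * Real.pi) := by
        rw [hcdef]; push_cast; field_simp
      rw [h3]; push_cast; ring
    rw [h2, Complex.exp_int_mul_two_pi_mul_I]
  have hζ1 : ζ ≠ 1 := by
    intro hcon
    have hwneg : Complex.exp ((↑(c * ((2:ℤ):ℝ)) : ℂ) * Complex.I) = -1 := by
      rw [← hwz]
      have h9 : w ^ (2:ℤ) = -ζ := by rw [hζdef]; ring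
      rw [h9, hcon]
    have h2 : Complex.exp (((c * 2 + Real.pi : ℝ) : ℂ) * Complex.I) = 1 := by
      have h8 : ((c * 2 + Real.pi : ℝ) : ℂ) * Complex.I
          = (↑(c * ((2:ℤ):ℝ)) : ℂ) * Complex.I + (Real.pi : ℂ) * Complex.I := by
        push_cast; ring
      rw [h8, Complex.exp_add, hwneg, Complex.exp_pi_mul_I]
      ring
    rw [Complex.exp_eq_one_iff] at h2
    obtain ⟨n, hn⟩ := h2
    have hre : (c * 2 + Real.pi : ℝ) = (n : ℝ) * (2 * Real.pi) := by
      have h4 := congrArg Complex.im hn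
      simpa using h4
    rw [hcdef] at hre
    have h5 : (4 * (h:ℝ) + (l:ℝ)) * Real.pi = (2 * (n:ℝ) * (l:ℝ)) * Real.pi := by
      have h5a := congrArg (fun x : ℝ => x * (l:ℝ)) hre
      field_simp at h5a
      linear_combination Real.pi * h5a
    have h6 : (4 * (h:ℝ) + (l:ℝ)) = 2 * (n:ℝ) * (l:ℝ) :=
      mul_right_cancel₀ Real.pi_ne_zero h5
    have h7 : 4 * h + (l:ℤ) = 2 * n * (l:ℤ) := by exact_mod_cast h6
    exact hndvd ⟨2 * n - 1, by linarith⟩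
  have hgeom : ∑ k ∈ Finset.range l, ζ ^ k = 0 := by
    rw [geom_sum_eq hζ1, hζl]; simp
  have hgeom' : ∑ k ∈ Finset.range l, ((starRingEnd ℂ) ζ) ^ k = 0 := by
    have : ∑ k ∈ Finset.range l, ((starRingEnd ℂ) ζ) ^ k
        = (starRingEnd ℂ) (∑ k ∈ Finset.range l, ζ ^ k) := by
      rw [map_sum]; simp [map_pow]
    rw [this, hgeom, map_zero]
  have hterm : ∀ k : ℕ, φ ((k:ℤ)+i) * (starRingEnd ℂ) (φ ((k:ℤ)+j)) =
      (w ^ (i-j) + w ^ (j-i)) +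
        (ζ ^ k * w ^ (i+j) + ((starRingEnd ℂ) ζ) ^ k * w ^ (-(i+j))) := by
    intro k
    have hA : w ^ i ≠ 0 := zpow_ne_zero _ hw0
    have hB : w ^ j ≠ 0 := zpow_ne_zero _ hw0
    have hK : w ^ (k:ℤ) ≠ 0 := zpow_ne_zero _ hw0
    rcases Nat.even_or_odd k with hk | hk
    · have hki : Even ((k:ℤ) + i) := (Int.even_coe_nat k |>.mpr hk).add hi
      have hkj : Even ((k:ℤ) + j) := (Int.even_coe_nat k |>.mpr hk).add hj
      have e1 : ζ ^ k = w ^ (k:ℤ) * w ^ (k:ℤ) := by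
        rw [hζdef, hk.neg_pow, ← zpow_natCast (w ^ (2:ℤ)) k, ← zpow_mul,
          show (2:ℤ) * (k:ℤ) = (k:ℤ) + (k:ℤ) by ring, zpow_add₀ hw0]
      have e2 : ((starRingEnd ℂ) ζ) ^ k = (w ^ (k:ℤ) * w ^ (k:ℤ))⁻¹ := by
        rw [hconjζ, hk.neg_pow, ← zpow_natCast (w ^ (-2:ℤ)) k, ← zpow_mul,
          show (-2:ℤ) * (k:ℤ) = -((k:ℤ) + (k:ℤ)) by ring, zpow_neg, zpow_add₀ hw0]
      rw [hφe' _ hki, hφe' _ hkj, map_add, hconjw, hconjw, e1, e2, neg_neg]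
      simp only [zpow_add₀ hw0, zpow_sub₀ hw0, zpow_neg]
      set K := w ^ (k:ℤ) with hKdef
      set A := w ^ i with hAdef
      set B := w ^ j with hBdef
      field_simp
      ring
    · have hki : Odd ((k:ℤ) + i) := by
        rcases hk with ⟨t, ht⟩; rcases hi with ⟨u, hu⟩
        exact ⟨(t:ℤ) + u, by push_cast [ht]; omega⟩
      have hkj : Odd ((k:ℤ) + j) := by
        rcases hk with ⟨t, ht⟩; rcases hj with ⟨u, hu⟩
        exact ⟨(t:ℤ) + u, by push_cast [ht]; omega⟩
      have e1 : ζ ^ k = -(w ^ (k:ℤ) * w ^ (k:ℤ)) := by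
        rw [hζdef, hk.neg_pow, ← zpow_natCast (w ^ (2:ℤ)) k, ← zpow_mul,
          show (2:ℤ) * (k:ℤ) = (k:ℤ) + (k:ℤ) by ring, zpow_add₀ hw0]
      have e2 : ((starRingEnd ℂ) ζ) ^ k = -(w ^ (k:ℤ) * w ^ (k:ℤ))⁻¹ := by
        rw [hconjζ, hk.neg_pow, ← zpow_natCast (w ^ (-2:ℤ)) k, ← zpow_mul,
          show (-2:ℤ) * (k:ℤ) = -((k:ℤ) + (k:ℤ)) by ring, zpow_neg, zpow_add₀ hw0]
      rw [hφo' _ hki, hφo' _ hkj, map_sub, hconjw, hconjw, e1, e2, neg_neg]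
      simp only [zpow_add₀ hw0, zpow_sub₀ hw0, zpow_neg]
      set K := w ^ (k:ℤ) with hKdef
      set A := w ^ i with hAdef
      set B := w ^ j with hBdef
      field_simp
      ring
  have hargeq : c * (((i - j):ℤ):ℝ)
      = ((i:ℝ) - (j:ℝ)) * (2 * (h:ℝ) / (l:ℝ)) * Real.pi := by
    rw [hcdef]; push_cast; ring
  have hx : c * (((-(i-j)):ℤ) : ℝ) = -(c * (((i - j):ℤ):ℝ)) := by push_cast; ring
  have hfin : w ^ (i - j) + w ^ (j - i)
      = (2:ℂ) * ((Real.cos (((i:ℝ)-(j:ℝ)) * (2*(h:ℝ)/(l:ℝ)) * Real.pi)) : ℂ) := by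
    rw [show j - i = -(i-j) by ring, hwz, hwz, hx, ← hcos, hargeq]
  rw [Finset.sum_congr rfl fun k _ => hterm k]
  simp only [Finset.sum_add_distrib]
  rw [← Finset.sum_mul, ← Finset.sum_mul, hgeom, hgeom', zero_mul, zero_mul,
    add_zero, add_zero, Finset.sum_const, Finset.sum_const, Finset.card_range,
    nsmul_eq_mul, nsmul_eq_mul, ← mul_add, hfin]
  push_cast
  ring
end
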